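/- arXiv:0712.2270 — 2 statements merged into one kernel-verified Lean document; each statement's English description precedes it below -/
import Mathlib

section
/- μ* is countably additive on S̃: if (Sᵢ) is a sequence of pairwise disjoint members of S̃, then μ*(⋃ᵢ Sᵢ) = ∑ᵢ μ*(Sᵢ). -/
open scoped symmDiff ENNReal
open Filter Set Topology

/-- The outer measure induced by `μ : Ω → ℝ≥0∞`:
`μ*(E) = inf { ∑ᵢ μ(Aᵢ) : E ⊆ ⋃ᵢ Aᵢ, each Aᵢ ∈ Ω }`. -/
noncomputable def muStar {X : Type*} (Ω : Set (Set X)) (μ : Set X → ℝ≥0∞) (E : Set X) : ℝ≥0∞ :=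
  ⨅ (A : ℕ → Set X) (_ : ∀ i, A i ∈ Ω) (_ : E ⊆ ⋃ i, A i), ∑' i, μ (A i)

/-- `S̃ = { S ⊆ X : ∃ (Bₙ) in Ω with μ*(Bₙ △ S) → 0 }`. -/
def Stilde {X : Type*} (Ω : Set (Set X)) (μ : Set X → ℝ≥0∞) : Set (Set X) :=
  {S | ∃ B : ℕ → Set X, (∀ n, B n ∈ Ω) ∧
    Tendsto (fun n => muStar Ω μ (B n ∆ S)) atTop (𝓝 0)}

/-! `μ*` is the outer measure induced by `μ` extended by `∞` off `Ω`, and finite additivity of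
`μ` makes every member of `Ω` Carathéodory-measurable for it. If the Carathéodory inequality
`μ*(t ∩ S) + μ*(t \ S) ≤ μ*(t)` holds for `B`, it holds for `S` up to the error `2 μ*(B △ S)`,
so it passes to the limits defining `S̃`. Hence the members of `S̃` are Carathéodory-measurable,
and `μ*` is countably additive on such sets. -/

open MeasureTheory

theorem MeasureTheory.IsSetRing.of_compl_mem {X : Type*} {Ω : Set (Set X)} (hΩempty : ∅ ∈ Ω)
    (hΩcompl : ∀ A ∈ Ω, Aᶜ ∈ Ω) (hΩunion : ∀ A ∈ Ω, ∀ B ∈ Ω, A ∪ B ∈ Ω) : IsSetRing Ω where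
  empty_mem := hΩempty
  union_mem _ _ hs ht := hΩunion _ hs _ ht
  sdiff_mem s _ hs ht := by
    rw [sdiff_eq_compl_inter, ← compl_compl s, ← compl_union]
    exact hΩcompl _ (hΩunion _ ht _ (hΩcompl _ hs))

def CountablyAdditiveOn {X : Type*} (Ω : Set (Set X)) (μ : Set X → ℝ≥0∞) : Prop :=
  ∀ A : ℕ → Set X, (∀ i, A i ∈ Ω) → Pairwise (Function.onFun Disjoint A) →
    (⋃ i, A i) ∈ Ω → μ (⋃ i, A i) = ∑' i, μ (A i)

section Premeasure

variable {X : Type*} {Ω : Set (Set X)} {μ : Set X → ℝ≥0∞}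

theorem CountablyAdditiveOn.union_eq_add (hμadd : CountablyAdditiveOn Ω μ) (hΩempty : ∅ ∈ Ω)
    (hμempty : μ ∅ = 0) {s t : Set X} (hs : s ∈ Ω) (ht : t ∈ Ω) (hst : s ∪ t ∈ Ω)
    (hdisj : Disjoint s t) :
    μ (s ∪ t) = μ s + μ t := by
  set A : ℕ → Set X := fun n => if n = 0 then s else if n = 1 then t else ∅ with hA
  have hAΩ : ∀ n, A n ∈ Ω := by
    intro n; rcases n with _ | _ | n <;> simp [hA, hs, ht, hΩempty]
  have hAunion : (⋃ n, A n) = s ∪ t := by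
    ext x
    simp only [mem_iUnion, mem_union, hA]
    constructor
    · rintro ⟨_ | _ | n, hx⟩ <;> simp_all
    · rintro (hx | hx)
      exacts [⟨0, by simpa⟩, ⟨1, by simpa⟩]
  have hAdisj : Pairwise (Function.onFun Disjoint A) := by
    intro i j hij
    rcases i with _ | _ | i <;> rcases j with _ | _ | j <;>
      simp_all [Function.onFun, hdisj.symm]
  have hsum : ∑' n, μ (A n) = μ s + μ t := by
    rw [tsum_eq_sum (s := Finset.range 2)]
    · simp [Finset.sum_range_succ, hA]
    · intro n hn
      rw [Finset.mem_range, not_lt] at hn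
      simp [hA, show n ≠ 0 by omega, show n ≠ 1 by omega, hμempty]
  rw [← hAunion, hμadd A hAΩ hAdisj (hAunion ▸ hst), hsum]

theorem muStar_eq_inducedOuterMeasure (hΩempty : ∅ ∈ Ω) (hμempty : μ ∅ = 0) :
    muStar Ω μ = inducedOuterMeasure (fun s (_ : s ∈ Ω) => μ s) hΩempty hμempty := by
  ext E
  -- `extend` is `∞` off `Ω`, so covers leaving `Ω` do not lower the infimum.
  rw [muStar, inducedOuterMeasure, OuterMeasure.ofFunction_apply]
  refine le_antisymm (le_iInf₂ fun A hA => ?_) (le_iInf₂ fun A hAΩ => le_iInf fun hA => ?_)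
  · by_cases hAΩ : ∀ i, A i ∈ Ω
    · refine iInf₂_le_of_le A hAΩ (iInf_le_of_le hA (le_of_eq (tsum_congr fun i => ?_)))
      exact (extend_eq (fun s _ => μ s) (hAΩ i)).symm
    · obtain ⟨i, hi⟩ := not_forall.mp hAΩ
      exact le_top.trans_eq (ENNReal.tsum_eq_top_of_eq_top ⟨i, extend_eq_top _ hi⟩).symm
  · exact iInf₂_le_of_le A hA (le_of_eq (tsum_congr fun i => extend_eq _ (hAΩ i)))

theorem isCaratheodory_inducedOuterMeasure_of_mem (hΩ : IsSetRing Ω) (hμempty : μ ∅ = 0)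
    (hμadd : CountablyAdditiveOn Ω μ) {s : Set X} (hs : s ∈ Ω) :
    (inducedOuterMeasure (fun s (_ : s ∈ Ω) => μ s) hΩ.empty_mem hμempty).IsCaratheodory s :=
  AddContent.isCaratheodory_inducedOuterMeasure_of_mem hΩ.isSetSemiring
    (hΩ.addContent_of_union μ hμempty fun ht hu htu =>
      hμadd.union_eq_add hΩ.empty_mem hμempty ht hu (hΩ.union_mem ht hu) htu)
    hs

end Premeasure

namespace MeasureTheory.OuterMeasure

variable {α : Type*} (m : OuterMeasure α)

theorem add_le_add_symmDiff_of_isCaratheodory {b : Set α} (hb : m.IsCaratheodory b)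
    (s t : Set α) : m (t ∩ s) + m (t \ s) ≤ m t + 2 * m (b ∆ s) := by
  have hinter : t ∩ s ⊆ (t ∩ b) ∪ (b ∆ s) := by
    intro x ⟨hxt, hxs⟩
    by_cases hxb : x ∈ b
    · exact Or.inl ⟨hxt, hxb⟩
    · exact Or.inr (Or.inr ⟨hxs, hxb⟩)
  have hdiff : t \ s ⊆ (t \ b) ∪ (b ∆ s) := by
    intro x ⟨hxt, hxs⟩
    by_cases hxb : x ∈ b
    · exact Or.inr (Or.inl ⟨hxb, hxs⟩)
    · exact Or.inl ⟨hxt, hxb⟩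
  calc m (t ∩ s) + m (t \ s)
      ≤ (m (t ∩ b) + m (b ∆ s)) + (m (t \ b) + m (b ∆ s)) := by
        gcongr
        · exact (measure_mono hinter).trans (measure_union_le _ _)
        · exact (measure_mono hdiff).trans (measure_union_le _ _)
    _ = (m (t ∩ b) + m (t \ b)) + 2 * m (b ∆ s) := by ring
    _ ≤ m t + 2 * m (b ∆ s) := by gcongr; exact (m.isCaratheodory_iff_le.mp hb) t

theorem isCaratheodory_of_tendsto_symmDiff {B : ℕ → Set α} {s : Set α}
    (hB : ∀ n, m.IsCaratheodory (B n)) (hlim : Tendsto (fun n => m (B n ∆ s)) atTop (𝓝 0)) :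
    m.IsCaratheodory s := by
  refine m.isCaratheodory_iff_le.mpr fun t => ?_
  have hbound : Tendsto (fun n => m t + 2 * m (B n ∆ s)) atTop (𝓝 (m t)) := by
    simpa using
      tendsto_const_nhds.add (ENNReal.Tendsto.const_mul hlim (Or.inr ENNReal.ofNat_ne_top))
  exact ge_of_tendsto hbound (Eventually.of_forall fun n =>
    m.add_le_add_symmDiff_of_isCaratheodory (hB n) s t)

end MeasureTheory.OuterMeasure

theorem stmt_12_general {X : Type*} (Ω : Set (Set X)) (μ : Set X → ℝ≥0∞)
    (hΩempty : ∅ ∈ Ω)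
    (hΩcompl : ∀ A ∈ Ω, Aᶜ ∈ Ω) (hΩunion : ∀ A ∈ Ω, ∀ B ∈ Ω, A ∪ B ∈ Ω)
    (hμempty : μ ∅ = 0)
    (hμadd : ∀ A : ℕ → Set X, (∀ i, A i ∈ Ω) → Pairwise (Function.onFun Disjoint A) →
      (⋃ i, A i) ∈ Ω → μ (⋃ i, A i) = ∑' i, μ (A i))
    (S : ℕ → Set X) (hS : ∀ i, S i ∈ Stilde Ω μ)
    (hdisj : Pairwise (Function.onFun Disjoint S)) :
    muStar Ω μ (⋃ i, S i) = ∑' i, muStar Ω μ (S i) := by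
  have hΩ : IsSetRing Ω := .of_compl_mem hΩempty hΩcompl hΩunion
  rw [muStar_eq_inducedOuterMeasure hΩempty hμempty]
  refine OuterMeasure.iUnion_eq_of_caratheodory _ (fun i => ?_) hdisj
  obtain ⟨B, hBΩ, hB⟩ := hS i
  rw [muStar_eq_inducedOuterMeasure hΩempty hμempty] at hB
  exact OuterMeasure.isCaratheodory_of_tendsto_symmDiff _
    (fun n => isCaratheodory_inducedOuterMeasure_of_mem hΩ hμempty hμadd (hBΩ n)) hB

/-- `μ*` is countably additive on `S̃`: if `(Sᵢ)` is a sequence of pairwise disjoint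
members of `S̃`, then `μ*(⋃ᵢ Sᵢ) = ∑ᵢ μ*(Sᵢ)`. -/
theorem stmt_12 {X : Type*} (Ω : Set (Set X)) (μ : Set X → ℝ≥0∞)
    (hΩempty : ∅ ∈ Ω) (hΩuniv : Set.univ ∈ Ω)
    (hΩcompl : ∀ A ∈ Ω, Aᶜ ∈ Ω) (hΩunion : ∀ A ∈ Ω, ∀ B ∈ Ω, A ∪ B ∈ Ω)
    (hμempty : μ ∅ = 0) (hμfin : μ Set.univ < ⊤)
    (hμadd : ∀ A : ℕ → Set X, (∀ i, A i ∈ Ω) → Pairwise (Function.onFun Disjoint A) →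
      (⋃ i, A i) ∈ Ω → μ (⋃ i, A i) = ∑' i, μ (A i))
    (S : ℕ → Set X) (hS : ∀ i, S i ∈ Stilde Ω μ)
    (hdisj : Pairwise (Function.onFun Disjoint S)) :
    muStar Ω μ (⋃ i, S i) = ∑' i, muStar Ω μ (S i) :=
  stmt_12_general Ω μ hΩempty hΩcompl hΩunion hμempty hμadd S hS hdisj
end

section
/- If E ⊆ X is Caratheodory measurable with respect to μ*, then for every ε > 0 there exists a set B ∈ Ω with μ*(B △ E) < ε. -/
open scoped symmDiff ENNReal
open Filter Set Topology

/-!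
Cover `E` by a sequence `Aᵢ` in `Ω` with `∑ μ(Aᵢ) < μ*(E) + ε/2` and let `B` be the union of
its first `N` members, with `N` chosen so that the tail `∑_{i ≥ N} μ(Aᵢ)` is below `ε/2`.
Carathéodory measurability of `E` splits `μ*(B △ E)` as `μ*(E \ B) + μ*(B \ E)`. The first
term is at most the tail; for the second, measurability applied to `⋃ Aᵢ ⊇ E` gives
`μ*(E) + μ*(⋃ Aᵢ \ E) = μ*(⋃ Aᵢ) < μ*(E) + ε/2`, and `μ*(E)` is finite since `μ(X)` is.
-/

section muStar

variable {X : Type*} (Ω : Set (Set X)) (μ : Set X → ℝ≥0∞)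

lemma biUnion_lt_mem (hΩempty : ∅ ∈ Ω) (hΩunion : ∀ A ∈ Ω, ∀ B ∈ Ω, A ∪ B ∈ Ω)
    {A : ℕ → Set X} (hA : ∀ i, A i ∈ Ω) (n : ℕ) : (⋃ i < n, A i) ∈ Ω := by
  induction n with
  | zero => simpa using hΩempty
  | succ n ih => simpa only [biUnion_lt_succ] using hΩunion _ ih _ (hA n)

lemma muStar_le_tsum {S : Set X} {A : ℕ → Set X} (hA : ∀ i, A i ∈ Ω) (hS : S ⊆ ⋃ i, A i) :
    muStar Ω μ S ≤ ∑' i, μ (A i) :=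
  iInf₂_le_of_le A hA (iInf_le _ hS)

lemma exists_cover_tsum_lt {S : Set X} {c : ℝ≥0∞} (h : muStar Ω μ S < c) :
    ∃ A : ℕ → Set X, (∀ i, A i ∈ Ω) ∧ S ⊆ ⋃ i, A i ∧ ∑' i, μ (A i) < c := by
  simpa only [muStar, iInf_lt_iff, exists_prop] using h

lemma muStar_mono {S T : Set X} (h : S ⊆ T) : muStar Ω μ S ≤ muStar Ω μ T :=
  le_iInf₂ fun _ hA => le_iInf fun hT => muStar_le_tsum Ω μ hA (h.trans hT)

lemma muStar_le_of_mem (hΩempty : ∅ ∈ Ω) (hμempty : μ ∅ = 0) {S : Set X} (hS : S ∈ Ω) :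
    muStar Ω μ S ≤ μ S := by
  classical
  calc muStar Ω μ S ≤ ∑' i, μ (if i = 0 then S else ∅) :=
        muStar_le_tsum Ω μ (fun i => by split_ifs <;> assumption)
          (subset_iUnion_of_subset 0 (by simp))
    _ = μ S := by
        rw [tsum_eq_single 0 fun i hi => by simp [hi, hμempty]]
        simp

lemma muStar_lt_top (hΩempty : ∅ ∈ Ω) (hΩuniv : univ ∈ Ω) (hμempty : μ ∅ = 0)
    (hμfin : μ univ < ⊤) (S : Set X) : muStar Ω μ S < ⊤ :=
  ((muStar_mono Ω μ (subset_univ S)).trans (muStar_le_of_mem Ω μ hΩempty hμempty hΩuniv)).trans_lt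
    hμfin

lemma muStar_diff_biUnion_lt_le_tsum {S : Set X} {A : ℕ → Set X} (hA : ∀ i, A i ∈ Ω)
    (hS : S ⊆ ⋃ i, A i) (N : ℕ) :
    muStar Ω μ (S \ ⋃ i < N, A i) ≤ ∑' k, μ (A (k + N)) := by
  refine muStar_le_tsum Ω μ (fun k => hA _) fun x ⟨hxS, hxB⟩ => ?_
  obtain ⟨i, hi⟩ := mem_iUnion.1 (hS hxS)
  have hNi : N ≤ i := not_lt.1 fun hiN => hxB (mem_biUnion hiN hi)
  exact mem_iUnion.2 ⟨i - N, by rwa [Nat.sub_add_cancel hNi]⟩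

lemma muStar_symmDiff_eq_add {E : Set X}
    (hE : ∀ A : Set X, muStar Ω μ A = muStar Ω μ (A ∩ E) + muStar Ω μ (A ∩ Eᶜ)) (B : Set X) :
    muStar Ω μ (B ∆ E) = muStar Ω μ (E \ B) + muStar Ω μ (B \ E) := by
  have hE_part : B ∆ E ∩ E = E \ B := by
    ext; simp only [mem_inter_iff, mem_symmDiff, Set.mem_sdiff]; tauto
  have hEc_part : B ∆ E ∩ Eᶜ = B \ E := by
    ext; simp only [mem_inter_iff, mem_symmDiff, Set.mem_sdiff, mem_compl_iff]; tauto
  rw [hE (B ∆ E), hE_part, hEc_part]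

lemma muStar_iUnion_diff_lt {E : Set X}
    (hE : ∀ A : Set X, muStar Ω μ A = muStar Ω μ (A ∩ E) + muStar Ω μ (A ∩ Eᶜ))
    (hE_ne_top : muStar Ω μ E ≠ ⊤) {A : ℕ → Set X} (hA : ∀ i, A i ∈ Ω) (hEA : E ⊆ ⋃ i, A i)
    {δ : ℝ≥0∞} (hsum : ∑' i, μ (A i) < muStar Ω μ E + δ) :
    muStar Ω μ ((⋃ i, A i) \ E) < δ := by
  refine (ENNReal.add_lt_add_iff_left hE_ne_top).1 ?_
  calc muStar Ω μ E + muStar Ω μ ((⋃ i, A i) \ E)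
      = muStar Ω μ (⋃ i, A i) := by rw [hE (⋃ i, A i), inter_eq_right.2 hEA, sdiff_eq]
    _ ≤ ∑' i, μ (A i) := muStar_le_tsum Ω μ hA subset_rfl
    _ < muStar Ω μ E + δ := hsum

end muStar

theorem stmt_16_general {X : Type*} (Ω : Set (Set X)) (μ : Set X → ℝ≥0∞)
    (hΩempty : ∅ ∈ Ω) (hΩuniv : Set.univ ∈ Ω)
    (hΩunion : ∀ A ∈ Ω, ∀ B ∈ Ω, A ∪ B ∈ Ω)
    (hμempty : μ ∅ = 0) (hμfin : μ Set.univ < ⊤)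
    (E : Set X)
    (hE : ∀ A : Set X, muStar Ω μ A = muStar Ω μ (A ∩ E) + muStar Ω μ (A ∩ Eᶜ)) :
    ∀ ε : ℝ≥0∞, 0 < ε → ∃ B ∈ Ω, muStar Ω μ (B ∆ E) < ε := by
  intro ε hε
  have hε2 : 0 < ε / 2 := ENNReal.half_pos hε.ne'
  have hE_ne_top := (muStar_lt_top Ω μ hΩempty hΩuniv hμempty hμfin E).ne
  obtain ⟨A, hA, hEA, hsum⟩ :=
    exists_cover_tsum_lt Ω μ (ENNReal.lt_add_right hE_ne_top hε2.ne')
  obtain ⟨N, hN⟩ := ((ENNReal.tendsto_sum_nat_add _ (hsum.trans_le le_top).ne).eventually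
    (gt_mem_nhds hε2)).exists
  refine ⟨⋃ i < N, A i, biUnion_lt_mem Ω hΩempty hΩunion hA N, ?_⟩
  have hB_sub : (⋃ i < N, A i) ⊆ ⋃ i, A i := iUnion₂_subset fun i _ => subset_iUnion A i
  calc muStar Ω μ ((⋃ i < N, A i) ∆ E)
      = muStar Ω μ (E \ ⋃ i < N, A i) + muStar Ω μ ((⋃ i < N, A i) \ E) :=
        muStar_symmDiff_eq_add Ω μ hE _
    _ < ε / 2 + ε / 2 := ENNReal.add_lt_add
        ((muStar_diff_biUnion_lt_le_tsum Ω μ hA hEA N).trans_lt hN)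
        ((muStar_mono Ω μ (sdiff_subset_sdiff_left hB_sub)).trans_lt
          (muStar_iUnion_diff_lt Ω μ hE hE_ne_top hA hEA hsum))
    _ = ε := ENNReal.add_halves ε

/-- If `E` is Caratheodory measurable with respect to `μ*`, then for every `ε > 0`
there exists `B ∈ Ω` with `μ*(B △ E) < ε`. -/
theorem stmt_16 {X : Type*} (Ω : Set (Set X)) (μ : Set X → ℝ≥0∞)
    (hΩempty : ∅ ∈ Ω) (hΩuniv : Set.univ ∈ Ω)
    (hΩcompl : ∀ A ∈ Ω, Aᶜ ∈ Ω) (hΩunion : ∀ A ∈ Ω, ∀ B ∈ Ω, A ∪ B ∈ Ω)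
    (hμempty : μ ∅ = 0) (hμfin : μ Set.univ < ⊤)
    (hμadd : ∀ A : ℕ → Set X, (∀ i, A i ∈ Ω) → Pairwise (Function.onFun Disjoint A) →
      (⋃ i, A i) ∈ Ω → μ (⋃ i, A i) = ∑' i, μ (A i))
    (E : Set X)
    (hE : ∀ A : Set X, muStar Ω μ A = muStar Ω μ (A ∩ E) + muStar Ω μ (A ∩ Eᶜ)) :
    ∀ ε : ℝ≥0∞, 0 < ε → ∃ B ∈ Ω, muStar Ω μ (B ∆ E) < ε :=
  stmt_16_general Ω μ hΩempty hΩuniv hΩunion hμempty hμfin E hE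
end
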